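/- Let p be an odd prime and l an integer with p ∤ l. Let n ≥ 1 and let (a_1,b_1),…,(a_n,b_n) be pairs of coprime integers such that for some 1 ≤ n'_0 < n_0 ≤ n: a_j = p·a'_j with p ∤ a'_j for 1 ≤ j ≤ n'_0; a_j = p·a'_j with p ∣ a'_j for n'_0 < j ≤ n_0; and p ∤ a_j for j > n_0. Then Σ_{h ∈ ℤ/pℤ} Σ_{s=0}^{p−1} Π_{j=1}^{n} η_{h,s}(a_j,b_j) = p^{n_0−n'_0} · Π_{j=1}^{n'_0} S_p(l·a'_j·b_j); consequently the Dijkgraaf–Witten invariant satisfies Z^{ω_l}(M_O(g;(a_1,b_1),…,(a_n,b_n))) = p^{2g−2}·p^{n_0−n'_0}·Π_{j=1}^{n'_0} S_p(l·a'_j·b_j). -/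

import Mathlib

/-- `ζ_n = exp(2πi/n)`. -/
noncomputable def zetaC (n : ℕ) : ℂ := Complex.exp (2 * Real.pi * Complex.I / n)

/-- The Gauss-type sum `S_p(A) = Σ_{k=0}^{p−1} ζ_p^{A·k²}`. -/
noncomputable def SP (p : ℕ) (A : ℤ) : ℂ := ∑ k ∈ Finset.range p, zetaC p ^ (A * (k : ℤ) ^ 2)

/-- `η_{h,s}(a,b) = Σ_{z ∈ ℤ/pℤ, a·z = h} ζ_{p²}^{l·a·b·z̃² − (2·l·h̃ + p·s)·b·z̃}`. -/
noncomputable def etaP (p : ℕ) [NeZero p] (l : ℤ) (h : ZMod p) (s a b : ℤ) : ℂ :=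
  ∑ z : ZMod p,
    if a • z = h then
      zetaC (p ^ 2) ^
        (l * a * b * (z.val : ℤ) ^ 2 - (2 * l * (h.val : ℤ) + p * s) * b * (z.val : ℤ))
    else 0

/-!
Every factor `η_{h,s}(a,b)` with `p ∣ a` vanishes unless `h = 0`, since then `a • z = 0` for all
`z`. For `h = 0` and `a = p·a'` the exponent is divisible by `p`, so `ζ_{p²}` collapses to `ζ_p`
and `η_{0,s}(p·a', b) = Σ_k ζ_p^{l·a'·b·k² − s·b·k}`. If moreover `p ∣ a'`, this is the
geometric sum `Σ_k ζ_p^{−s·b·k}`, which is `p` for `s = 0` and `0` for `0 < s < p` (coprimality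
gives `p ∤ b`). Hence only `h = 0, s = 0` survives, where the factors are `S_p(l·a'_j·b_j)`,
then `p`, then `1` (only `z = 0` solves `a·z = 0` when `p ∤ a`).
-/

lemma isPrimitiveRoot_zetaC (n : ℕ) [NeZero n] : IsPrimitiveRoot (zetaC n) n :=
  Complex.isPrimitiveRoot_exp n (NeZero.ne n)

lemma zetaC_zpow_natCast_mul (n : ℕ) [NeZero n] (x : ℤ) : zetaC n ^ ((n : ℤ) * x) = 1 := by
  rw [zpow_mul, zpow_natCast, (isPrimitiveRoot_zetaC n).pow_eq_one, one_zpow]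

lemma zetaC_sq_zpow_natCast_mul (n : ℕ) [NeZero n] (x : ℤ) :
    zetaC (n ^ 2) ^ ((n : ℤ) * x) = zetaC n ^ x := by
  have hn : (n : ℂ) ≠ 0 := NeZero.ne _
  have hroot : zetaC (n ^ 2) ^ n = zetaC n := by
    simp only [zetaC, ← Complex.exp_nat_mul]
    congr 1
    push_cast
    field_simp
  rw [zpow_mul, zpow_natCast, hroot]

lemma sum_range_zetaC_zpow_mul_eq_zero (n : ℕ) [NeZero n] {c : ℤ} (hc : ¬ (n : ℤ) ∣ c) :
    ∑ k ∈ Finset.range n, zetaC n ^ (c * k) = 0 := by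
  have hne : zetaC n ^ c ≠ 1 := mt ((isPrimitiveRoot_zetaC n).zpow_eq_one_iff_dvd c).mp hc
  have hpow : (zetaC n ^ c) ^ n = 1 := by
    rw [← zpow_natCast, ← zpow_mul, mul_comm, zetaC_zpow_natCast_mul]
  simp_rw [zpow_mul, zpow_natCast]
  rw [geom_sum_eq hne, hpow, sub_self, zero_div]

lemma sum_zmod_val_eq_sum_range (n : ℕ) [NeZero n] {M : Type*} [AddCommMonoid M] (f : ℕ → M) :
    ∑ z : ZMod n, f z.val = ∑ k ∈ Finset.range n, f k :=
  Finset.sum_nbij' ZMod.val (↑) (fun z _ => Finset.mem_range.mpr z.val_lt)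
    (fun _ _ => Finset.mem_univ _) (fun z _ => ZMod.natCast_zmod_val z)
    (fun _ hk => ZMod.val_natCast_of_lt (Finset.mem_range.mp hk)) (fun _ _ => rfl)

section etaP

variable (p : ℕ) [NeZero p] (l : ℤ)

lemma etaP_eq_zero_of_dvd {h : ZMod p} (hh : h ≠ 0) (s : ℤ) {a : ℤ} (ha : (p : ℤ) ∣ a) (b : ℤ) :
    etaP p l h s a b = 0 := by
  refine Finset.sum_eq_zero fun z _ => if_neg fun e => hh ?_
  rw [← e, zsmul_eq_mul, (ZMod.intCast_zmod_eq_zero_iff_dvd a p).mpr ha, zero_mul]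

lemma etaP_zero_natCast_mul (s a' b : ℤ) :
    etaP p l 0 s (p * a') b =
      ∑ k ∈ Finset.range p, zetaC p ^ (l * a' * b * (k : ℤ) ^ 2 - s * b * k) := by
  rw [etaP, ← sum_zmod_val_eq_sum_range p]
  refine Finset.sum_congr rfl fun z _ => ?_
  have hz : ((p : ℤ) * a') • z = 0 := by simp [zsmul_eq_mul]
  rw [if_pos hz, ← zetaC_sq_zpow_natCast_mul p, ZMod.val_zero]
  push_cast
  ring_nf

lemma etaP_zero_natCast_mul_natCast_mul (s c b : ℤ) :
    etaP p l 0 s (p * (p * c)) b = ∑ k ∈ Finset.range p, zetaC p ^ (-(s * b) * k) := by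
  rw [etaP_zero_natCast_mul]
  refine Finset.sum_congr rfl fun k _ => ?_
  rw [show l * (p * c) * b * (k : ℤ) ^ 2 - s * b * k = p * (l * c * b * k ^ 2) + -(s * b) * k by
      ring, zpow_add₀ ((isPrimitiveRoot_zetaC p).ne_zero (NeZero.ne p)), zetaC_zpow_natCast_mul,
    one_mul]

lemma etaP_zero_zero_natCast_mul_natCast_mul (c b : ℤ) :
    etaP p l 0 0 (p * (p * c)) b = p := by
  simp [etaP_zero_natCast_mul_natCast_mul]

lemma etaP_zero_natCast_mul_natCast_mul_eq_zero {s b : ℤ} (hsb : ¬ (p : ℤ) ∣ s * b) (c : ℤ) :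
    etaP p l 0 s (p * (p * c)) b = 0 := by
  rw [etaP_zero_natCast_mul_natCast_mul]
  exact sum_range_zetaC_zpow_mul_eq_zero p (by rwa [Int.dvd_neg])

lemma etaP_zero_zero_natCast_mul (a' b : ℤ) : etaP p l 0 0 (p * a') b = SP p (l * a' * b) := by
  rw [etaP_zero_natCast_mul, SP]
  simp

lemma etaP_zero_of_not_dvd (hp : p.Prime) (s : ℤ) {a : ℤ} (ha : ¬ (p : ℤ) ∣ a) (b : ℤ) :
    etaP p l 0 s a b = 1 := by
  have := Fact.mk hp
  have ha' : (a : ZMod p) ≠ 0 := mt (ZMod.intCast_zmod_eq_zero_iff_dvd a p).mp ha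
  rw [etaP, Fintype.sum_eq_single 0 fun z hz => if_neg (by simpa [zsmul_eq_mul, ha'] using hz)]
  simp

lemma sum_sum_prod_etaP_eq_prod_etaP_zero (hp : p.Prime) (n : ℕ) (a b : ℕ → ℤ) {m : ℕ}
    (hm : m < n) {c : ℤ} (ham : a m = p * (p * c)) (hbm : ¬ (p : ℤ) ∣ b m) :
    ∑ h : ZMod p, ∑ s ∈ Finset.range p, ∏ j ∈ Finset.range n, etaP p l h s (a j) (b j) =
      ∏ j ∈ Finset.range n, etaP p l 0 0 (a j) (b j) := by
  have hm' : m ∈ Finset.range n := Finset.mem_range.mpr hm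
  rw [Fintype.sum_eq_single 0 fun h hh => Finset.sum_eq_zero fun s _ =>
    Finset.prod_eq_zero hm' (etaP_eq_zero_of_dvd p l hh _ ⟨p * c, ham⟩ _)]
  refine (Finset.sum_eq_single_of_mem 0 (Finset.mem_range.mpr hp.pos) fun s hs hs0 =>
    Finset.prod_eq_zero hm' ?_).trans (by simp)
  have hps : ¬ (p : ℤ) ∣ s := by
    rw [Int.natCast_dvd_natCast]
    exact fun hd => hs0 (Nat.eq_zero_of_dvd_of_lt hd (Finset.mem_range.mp hs))
  rw [ham]
  exact etaP_zero_natCast_mul_natCast_mul_eq_zero p l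
    (fun hd => ((Nat.prime_iff_prime_int.mp hp).dvd_or_dvd hd).elim hps hbm) c

end etaP

/- The paper's pairs `(a_j, b_j)`, `1 ≤ j ≤ n`, are indexed here by `j ∈ range n` (`0`-based).
By the paper's Theorem 3.3 the left side of the second conjunct is the Dijkgraaf–Witten invariant
`Z^{ω_l}(M_O(g;(a_1,b_1),…,(a_n,b_n)))`. -/
theorem statement18_general (p : ℕ) [NeZero p] (hp : p.Prime) (l : ℤ)
    (n n0' n0 : ℕ)
    (h2 : n0' < n0) (h3 : n0 ≤ n)
    (a a' b : ℕ → ℤ) (hcop : ∀ j < n, IsCoprime (a j) (b j))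
    (hsmall : ∀ j < n0', a j = (p : ℤ) * a' j ∧ ¬ (p : ℤ) ∣ a' j)
    (hmid : ∀ j, n0' ≤ j → j < n0 → a j = (p : ℤ) * a' j ∧ (p : ℤ) ∣ a' j)
    (hbig : ∀ j, n0 ≤ j → j < n → ¬ (p : ℤ) ∣ a j) (g : ℕ) :
    (∑ h : ZMod p, ∑ s ∈ Finset.range p, ∏ j ∈ Finset.range n, etaP p l h (s : ℤ) (a j) (b j)) =
      (p : ℂ) ^ (n0 - n0') * (∏ j ∈ Finset.range n0', SP p (l * a' j * b j)) ∧
    (p : ℂ) ^ (2 * (g : ℤ) - 2) *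
        (∑ h : ZMod p, ∑ s ∈ Finset.range p,
          ∏ j ∈ Finset.range n, etaP p l h (s : ℤ) (a j) (b j)) =
      (p : ℂ) ^ (2 * (g : ℤ) - 2) * (p : ℂ) ^ (n0 - n0') *
        (∏ j ∈ Finset.range n0', SP p (l * a' j * b j)) := by
  obtain ⟨ha, c, hc⟩ := hmid n0' le_rfl h2
  have hb : ¬ (p : ℤ) ∣ b n0' := fun hd => (Nat.prime_iff_prime_int.mp hp).not_isUnit <|
    (hcop n0' (h2.trans_le h3)).isUnit_of_dvd' ⟨a' n0', ha⟩ hd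
  have hsmallP : ∏ j ∈ Finset.range n0', etaP p l 0 0 (a j) (b j) =
      ∏ j ∈ Finset.range n0', SP p (l * a' j * b j) :=
    Finset.prod_congr rfl fun j hj => by
      rw [(hsmall j (Finset.mem_range.mp hj)).1, etaP_zero_zero_natCast_mul]
  have hmidP : ∏ j ∈ Finset.Ico n0' n0, etaP p l 0 0 (a j) (b j) = (p : ℂ) ^ (n0 - n0') := by
    rw [← Nat.card_Ico, ← Finset.prod_const]
    refine Finset.prod_congr rfl fun j hj => ?_
    obtain ⟨haj, cj, hcj⟩ := hmid j (Finset.mem_Ico.mp hj).1 (Finset.mem_Ico.mp hj).2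
    rw [haj, hcj, etaP_zero_zero_natCast_mul_natCast_mul]
  have hbigP : ∏ j ∈ Finset.Ico n0 n, etaP p l 0 0 (a j) (b j) = 1 :=
    Finset.prod_eq_one fun j hj =>
      etaP_zero_of_not_dvd p l hp 0 (hbig j (Finset.mem_Ico.mp hj).1 (Finset.mem_Ico.mp hj).2) _
  have key : ∑ h : ZMod p, ∑ s ∈ Finset.range p,
      ∏ j ∈ Finset.range n, etaP p l h (s : ℤ) (a j) (b j) =
        (p : ℂ) ^ (n0 - n0') * ∏ j ∈ Finset.range n0', SP p (l * a' j * b j) := by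
    rw [sum_sum_prod_etaP_eq_prod_etaP_zero p l hp n a b (h2.trans_le h3) (hc ▸ ha) hb,
      ← Finset.prod_range_mul_prod_Ico _ h3, ← Finset.prod_range_mul_prod_Ico _ h2.le,
      hsmallP, hmidP, hbigP, mul_one, mul_comm]
  exact ⟨key, by rw [key, mul_assoc]⟩

theorem statement18 (p : ℕ) [NeZero p] (hp : p.Prime) (hp2 : p ≠ 2) (l : ℤ)
    (hl : ¬ (p : ℤ) ∣ l) (n n0' n0 : ℕ) (hn : 1 ≤ n)
    (h1 : 1 ≤ n0') (h2 : n0' < n0) (h3 : n0 ≤ n)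
    (a a' b : ℕ → ℤ) (hcop : ∀ j < n, IsCoprime (a j) (b j))
    (hsmall : ∀ j < n0', a j = (p : ℤ) * a' j ∧ ¬ (p : ℤ) ∣ a' j)
    (hmid : ∀ j, n0' ≤ j → j < n0 → a j = (p : ℤ) * a' j ∧ (p : ℤ) ∣ a' j)
    (hbig : ∀ j, n0 ≤ j → j < n → ¬ (p : ℤ) ∣ a j) (g : ℕ) :
    (∑ h : ZMod p, ∑ s ∈ Finset.range p, ∏ j ∈ Finset.range n, etaP p l h (s : ℤ) (a j) (b j)) =
      (p : ℂ) ^ (n0 - n0') * (∏ j ∈ Finset.range n0', SP p (l * a' j * b j)) ∧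
    (p : ℂ) ^ (2 * (g : ℤ) - 2) *
        (∑ h : ZMod p, ∑ s ∈ Finset.range p,
          ∏ j ∈ Finset.range n, etaP p l h (s : ℤ) (a j) (b j)) =
      (p : ℂ) ^ (2 * (g : ℤ) - 2) * (p : ℂ) ^ (n0 - n0') *
        (∏ j ∈ Finset.range n0', SP p (l * a' j * b j)) :=
  statement18_general p hp l n n0' n0 h2 h3 a a' b hcop hsmall hmid hbig g
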